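/- If w solves the reduced quasilinear system (∂_t f = ∂_p(p² w ∂_p f), ∂_t w = p² w ∂_p f), then w satisfies the single scalar equation ∂_t w = p² w ∂_p² w + g₀ w, where g₀(p) = p² ∂_p(f₀(p) − ∂_p w₀(p)), f₀ = f(·,0), w₀ = w(·,0). -/

import Mathlib

open Set

lemma lineP (t : ℝ) (p : ℝ) : HasDerivAt (fun r : ℝ => (r, t)) ((1:ℝ), (0:ℝ)) p :=
  HasDerivAt.prodMk (hasDerivAt_id p) (hasDerivAt_const p t)

lemma lineT (p : ℝ) (t : ℝ) : HasDerivAt (fun τ : ℝ => (p, τ)) ((0:ℝ), (1:ℝ)) t :=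
  HasDerivAt.prodMk (hasDerivAt_const t p) (hasDerivAt_id t)

lemma second_line {W : ℝ × ℝ → ℝ} {line : ℝ → ℝ × ℝ} {l' : ℝ × ℝ} {s : ℝ}
    (h : DifferentiableAt ℝ (fderiv ℝ W) (line s)) (v : ℝ × ℝ)
    (hline : HasDerivAt line l' s) :
    HasDerivAt (fun τ => fderiv ℝ W (line τ) v)
      (fderiv ℝ (fderiv ℝ W) (line s) l' v) s := by
  have h1 : HasFDerivAt (fun y => fderiv ℝ W y v)
      ((ContinuousLinearMap.apply ℝ ℝ v).comp (fderiv ℝ (fderiv ℝ W) (line s))) (line s) :=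
    (ContinuousLinearMap.apply ℝ ℝ v).hasFDerivAt.comp (line s) h.hasFDerivAt
  exact h1.comp_hasDerivAt s hline

/-- If `w` solves the reduced quasilinear system, then `w` satisfies the scalar
porous-medium type equation `∂ₜ w = p² w ∂ₚ² w + g₀ w` with
`g₀(p) = p² ∂ₚ (f₀ − ∂ₚ w₀)`. -/
theorem stmt1 (pa pb T : ℝ) (hpa : 0 < pa) (hpb : pa < pb) (hT : 0 < T)
    (f w : ℝ → ℝ → ℝ)
    (hf : ContDiffOn ℝ 3 (fun q : ℝ × ℝ => f q.1 q.2) (Ioo pa pb ×ˢ Icc 0 T))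
    (hw : ContDiffOn ℝ 3 (fun q : ℝ × ℝ => w q.1 q.2) (Ioo pa pb ×ˢ Icc 0 T))
    (heqf : ∀ p ∈ Ioo pa pb, ∀ t ∈ Icc 0 T,
      deriv (fun τ => f p τ) t
        = deriv (fun q => q ^ 2 * w q t * deriv (fun r => f r t) q) p)
    (heqw : ∀ p ∈ Ioo pa pb, ∀ t ∈ Icc 0 T,
      deriv (fun τ => w p τ) t = p ^ 2 * w p t * deriv (fun r => f r t) p)
    (g₀ : ℝ → ℝ)
    (hg₀ : ∀ p, g₀ p = p ^ 2 * deriv (fun q => f q 0 - deriv (fun r => w r 0) q) p) :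
    ∀ p ∈ Ioo pa pb, ∀ t ∈ Icc 0 T,
      deriv (fun τ => w p τ) t
        = p ^ 2 * w p t * deriv (fun q => deriv (fun r => w r t) q) p + g₀ p * w p t := by
  have hT0 : (0:ℝ) ∈ Icc 0 T := ⟨le_refl _, hT.le⟩
  set S : Set (ℝ × ℝ) := Ioo pa pb ×ˢ Icc 0 T with hSdef
  set U : Set (ℝ × ℝ) := Ioo pa pb ×ˢ Ioo 0 T with hUdef
  set W : ℝ × ℝ → ℝ := fun q => w q.1 q.2 with hWdef
  set F : ℝ × ℝ → ℝ := fun q => f q.1 q.2 with hFdef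
  have hUopen : IsOpen U := isOpen_Ioo.prod isOpen_Ioo
  have hUS : U ⊆ S := prod_mono_right Ioo_subset_Icc_self
  have hSuniq : UniqueDiffOn ℝ S := isOpen_Ioo.uniqueDiffOn.prod (uniqueDiffOn_Icc hT)
  have hWat : ∀ x ∈ U, ContDiffAt ℝ 3 W x := fun x hx =>
    (hw.mono hUS).contDiffAt (hUopen.mem_nhds hx)
  have hFat : ∀ x ∈ U, ContDiffAt ℝ 3 F x := fun x hx =>
    (hf.mono hUS).contDiffAt (hUopen.mem_nhds hx)
  -- the space derivative of w, valid up to the time-boundary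
  set DW : ℝ × ℝ → ℝ := fun x => fderivWithin ℝ W S x (1, 0) with hDWdef
  have hDW2 : ContDiffOn ℝ 2 (fderivWithin ℝ W S) S :=
    hw.fderivWithin hSuniq (by norm_num)
  -- slice derivative in p, valid on all of S
  have hslicew : ∀ q ∈ Ioo pa pb, ∀ s ∈ Icc 0 T,
      HasDerivAt (fun r => w r s) (DW (q, s)) q := by
    intro q hq s hs
    have hx : (q, s) ∈ S := ⟨hq, hs⟩
    have hdw : HasFDerivWithinAt W (fderivWithin ℝ W S (q, s)) S (q, s) :=
      ((hw.differentiableOn (by norm_num)) _ hx).hasFDerivWithinAt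
    have hmaps : MapsTo (fun r : ℝ => (r, s)) (Ioo pa pb) S := fun r hr => ⟨hr, hs⟩
    have := hdw.comp_hasDerivWithinAt q (lineP s q).hasDerivWithinAt hmaps
    exact this.hasDerivAt (isOpen_Ioo.mem_nhds hq)
  have hslicef : ∀ q ∈ Ioo pa pb, ∀ s ∈ Icc 0 T,
      HasDerivAt (fun r => f r s) (fderivWithin ℝ F S (q, s) (1, 0)) q := by
    intro q hq s hs
    have hx : (q, s) ∈ S := ⟨hq, hs⟩
    have hdw : HasFDerivWithinAt F (fderivWithin ℝ F S (q, s)) S (q, s) :=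
      ((hf.differentiableOn (by norm_num)) _ hx).hasFDerivWithinAt
    have hmaps : MapsTo (fun r : ℝ => (r, s)) (Ioo pa pb) S := fun r hr => ⟨hr, hs⟩
    have := hdw.comp_hasDerivWithinAt q (lineP s q).hasDerivWithinAt hmaps
    exact this.hasDerivAt (isOpen_Ioo.mem_nhds hq)
  have hderivP : ∀ q ∈ Ioo pa pb, ∀ s ∈ Icc 0 T,
      deriv (fun r => w r s) q = DW (q, s) := fun q hq s hs => (hslicew q hq s hs).deriv
  -- fderivWithin = fderiv on U
  have hDWU : ∀ x ∈ U, fderivWithin ℝ W S x = fderiv ℝ W x := fun x hx =>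
    fderivWithin_of_mem_nhds (Filter.mem_of_superset (hUopen.mem_nhds hx) hUS)
  -- key conservation law : f - ∂ₚ w is constant in time
  have hkey : ∀ q ∈ Ioo pa pb, ∀ s ∈ Icc 0 T,
      f q s - DW (q, s) = f q 0 - DW (q, 0) := by
    intro q hq
    set φ : ℝ → ℝ := fun s => f q s - DW (q, s) with hφdef
    -- continuity of φ on [0, T]
    have hmapsq : MapsTo (fun s : ℝ => (q, s)) (Icc 0 T) S := fun s hs => ⟨hq, hs⟩
    have hcontline : ContinuousOn (fun s : ℝ => (q, s)) (Icc 0 T) :=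
      (continuous_const.prodMk continuous_id).continuousOn
    have hφcont : ContinuousOn φ (Icc 0 T) := by
      apply ContinuousOn.sub
      · exact (hf.continuousOn.comp hcontline hmapsq)
      · exact ((ContinuousLinearMap.apply ℝ ℝ ((1:ℝ), (0:ℝ))).continuous.comp_continuousOn
          (hDW2.continuousOn.comp hcontline hmapsq))
    -- φ has zero derivative on (0, T)
    have hφderiv : ∀ τ ∈ Ioo 0 T, HasDerivAt φ 0 τ := by
      intro τ hτ
      have hx : (q, τ) ∈ U := ⟨hq, hτ⟩
      have hτI : τ ∈ Icc 0 T := Ioo_subset_Icc_self hτ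
      have hWd : DifferentiableAt ℝ (fderiv ℝ W) (q, τ) :=
        ((hWat _ hx).fderiv_right (m := 2) (by norm_num)).differentiableAt (by norm_num)
      have hsymm := (hWat _ hx).isSymmSndFDerivAt (by norm_num)
      -- derivative of the first part : ∂ₜ f
      have hft : HasDerivAt (fun s => f q s) (fderiv ℝ F (q, τ) (0, 1)) τ :=
        (((hFat _ hx).differentiableAt (by norm_num)).hasFDerivAt).comp_hasDerivAt τ
          (lineT q τ)
      -- compute ∂ₜ f via heqf and heqw
      have h1 : fderiv ℝ F (q, τ) (0, 1)
          = deriv (fun r => r ^ 2 * w r τ * deriv (fun r' => f r' τ) r) q := by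
        rw [← hft.deriv]; exact heqf q hq τ hτI
      have h2 : deriv (fun r => r ^ 2 * w r τ * deriv (fun r' => f r' τ) r) q
          = deriv (fun r => fderiv ℝ W (r, τ) (0, 1)) q := by
        apply Filter.EventuallyEq.deriv_eq
        filter_upwards [isOpen_Ioo.mem_nhds hq] with r hr
        have hxr : (r, τ) ∈ U := ⟨hr, hτ⟩
        have hwt : HasDerivAt (fun s => w r s) (fderiv ℝ W (r, τ) (0, 1)) τ :=
          (((hWat _ hxr).differentiableAt (by norm_num)).hasFDerivAt).comp_hasDerivAt τ
            (lineT r τ)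
        rw [← heqw r hr τ hτI, hwt.deriv]
      have h3 : HasDerivAt (fun r => fderiv ℝ W (r, τ) (0, 1))
          (fderiv ℝ (fderiv ℝ W) (q, τ) (1, 0) (0, 1)) q :=
        second_line (line := fun r => (r, τ)) hWd (0, 1) (lineP τ q)
      -- derivative of the second part : ∂ₜ ∂ₚ w
      have h4 : HasDerivAt (fun s => fderiv ℝ W (q, s) (1, 0))
          (fderiv ℝ (fderiv ℝ W) (q, τ) (0, 1) (1, 0)) τ :=
        second_line (line := fun s => (q, s)) hWd (1, 0) (lineT q τ)
      have h5 : HasDerivAt (fun s => DW (q, s))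
          (fderiv ℝ (fderiv ℝ W) (q, τ) (0, 1) (1, 0)) τ := by
        apply h4.congr_of_eventuallyEq
        filter_upwards [isOpen_Ioo.mem_nhds hτ] with s hs
        exact (hDWU (q, s) ⟨hq, hs⟩ ▸ rfl : DW (q, s) = fderiv ℝ W (q, s) (1, 0))
      have hfd : HasDerivAt (fun s => f q s)
          (fderiv ℝ (fderiv ℝ W) (q, τ) (0, 1) (1, 0)) τ := by
        have : fderiv ℝ F (q, τ) (0, 1) = fderiv ℝ (fderiv ℝ W) (q, τ) (0, 1) (1, 0) := by
          rw [h1, h2, h3.deriv, hsymm.eq]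
        exact this ▸ hft
      have := hfd.sub h5; rw [sub_self] at this; exact this
    -- φ is constant on (0, T)
    have hconst : ∀ a ∈ Ioo (0:ℝ) T, ∀ b ∈ Ioo (0:ℝ) T, a ≤ b → φ b = φ a := by
      intro a ha b hb hab
      have := constant_of_has_deriv_right_zero
        (f := φ) (a := a) (b := b)
        (hφcont.mono (Icc_subset_Icc ha.1.le hb.2.le))
        (fun x hx => (hφderiv x ⟨lt_of_lt_of_le ha.1 hx.1, lt_of_lt_of_le hx.2 hb.2.le⟩
          |>.hasDerivWithinAt))
      exact this b ⟨hab, le_refl b⟩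
    have hconst' : ∀ a ∈ Ioo (0:ℝ) T, ∀ b ∈ Ioo (0:ℝ) T, φ b = φ a := by
      intro a ha b hb
      rcases le_total a b with h | h
      · exact hconst a ha b hb h
      · exact (hconst b hb a ha h).symm
    -- extend to the closed interval by continuity
    have hext : ∀ s ∈ Icc 0 T, φ s = φ (T / 2) := by
      have hhalf : T / 2 ∈ Ioo (0:ℝ) T := ⟨by linarith, by linarith⟩
      intro s hs
      rcases em (s ∈ Ioo (0:ℝ) T) with hsI | hsI
      · exact hconst' (T / 2) hhalf s hsI
      · have hsc : s ∈ closure (Ioo (0:ℝ) T) := by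
          rw [closure_Ioo hT.ne]; exact hs
        have hne : (nhdsWithin s (Ioo (0:ℝ) T)).NeBot :=
          mem_closure_iff_nhdsWithin_neBot.1 hsc
        have htend : Filter.Tendsto φ (nhdsWithin s (Ioo (0:ℝ) T)) (nhds (φ s)) :=
          ((hφcont s hs).mono Ioo_subset_Icc_self)
        have htend2 : Filter.Tendsto φ (nhdsWithin s (Ioo (0:ℝ) T)) (nhds (φ (T / 2))) := by
          apply Filter.Tendsto.congr' _ tendsto_const_nhds
          filter_upwards [self_mem_nhdsWithin] with x hx
          exact (hconst' (T / 2) hhalf x hx).symm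
        exact tendsto_nhds_unique htend htend2
    intro s hs
    have := (hext s hs).trans (hext 0 hT0).symm
    exact this
  -- now fix p and t and conclude
  intro p hp t ht
  -- equality of the two spatial functions on Ioo pa pb
  have hEq : ∀ q ∈ Ioo pa pb,
      f q t - deriv (fun r => w r t) q = f q 0 - deriv (fun r => w r 0) q := by
    intro q hq
    rw [hderivP q hq t ht, hderivP q hq 0 hT0]
    exact hkey q hq t ht
  -- differentiability of the pieces at p
  have hdiffDW : ∀ s ∈ Icc 0 T, DifferentiableAt ℝ (fun r => DW (r, s)) p := by
    intro s hs
    have hmaps : MapsTo (fun r : ℝ => (r, s)) (Ioo pa pb) S := fun r hr => ⟨hr, hs⟩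
    have hcomp : ContDiffOn ℝ 2 (fun r : ℝ => fderivWithin ℝ W S (r, s)) (Ioo pa pb) :=
      hDW2.comp ((contDiff_id.prodMk contDiff_const).contDiffOn) hmaps
    have : ContDiffOn ℝ 2 (fun r : ℝ => DW (r, s)) (Ioo pa pb) :=
      hcomp.clm_apply contDiffOn_const
    exact ((this.differentiableOn (by norm_num)) p hp).differentiableAt
      (isOpen_Ioo.mem_nhds hp)
  have hdiffd : ∀ s ∈ Icc 0 T, DifferentiableAt ℝ (fun r => deriv (fun r' => w r' s) r) p := by
    intro s hs
    apply (hdiffDW s hs).congr_of_eventuallyEq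
    filter_upwards [isOpen_Ioo.mem_nhds hp] with r hr
    exact hderivP r hr s hs
  have hdiffs : ∀ s ∈ Icc 0 T, DifferentiableAt ℝ (fun r => f r s) p := fun s hs =>
    (hslicef p hp s hs).differentiableAt
  -- derivatives of the two sides agree
  have hderEq : deriv (fun r => f r t) p - deriv (fun r => deriv (fun r' => w r' t) r) p
      = deriv (fun r => f r 0 - deriv (fun r' => w r' 0) r) p := by
    have h1 : deriv (fun r => f r t - deriv (fun r' => w r' t) r) p
        = deriv (fun r => f r 0 - deriv (fun r' => w r' 0) r) p := by
      apply Filter.EventuallyEq.deriv_eq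
      filter_upwards [isOpen_Ioo.mem_nhds hp] with r hr
      exact hEq r hr
    rw [← h1, deriv_fun_sub (hdiffs t ht) (hdiffd t ht)]
  -- finish
  have hfinal : deriv (fun r => f r t) p
      = deriv (fun r => deriv (fun r' => w r' t) r) p
        + deriv (fun r => f r 0 - deriv (fun r' => w r' 0) r) p := by linarith [hderEq]
  rw [heqw p hp t ht, hfinal, hg₀ p]
  ring
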